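/- Let n ≥ 3 and p, r, s ≥ 1, and let T be a tree with the following structure: a spine path v₁,…,vₙ with d(v₁) = d(vₙ) = p+1 and d(vᵢ) = p+2 for 2 ≤ i ≤ n−1; each spine vertex is adjacent to exactly p first-level pendant vertices, each of degree 1+r; each first-level pendant vertex is adjacent to exactly r second-level pendant vertices, each of degree 1+s; each second-level pendant vertex is adjacent to exactly s leaves of degree 1; and T has no other vertices or edges. Then σ(T) = n·p·r·s³ + p(n−2)(p+1−r)² + 2p(p−r)² + n·p·r·(r−s)² + 2. -/

import Mathlib

open Finset

variable {V : Type*}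

noncomputable def sigmaIndex [Fintype V] (G : SimpleGraph V) : ℤ := by
  classical
  exact ∑ e ∈ G.edgeFinset,
    Sym2.lift ⟨fun u v => ((G.degree u : ℤ) - (G.degree v : ℤ)) ^ 2, fun u v => by ring⟩ e

noncomputable def deg [Fintype V] (G : SimpleGraph V) (v : V) : ℕ := by
  classical
  exact G.degree v

noncomputable def nbrCount [Fintype V] (G : SimpleGraph V) (v : V) (P : V → Prop) : ℕ := by
  classical
  exact ((G.neighborFinset v).filter P).card

def IsCaterpillar [Fintype V] (G : SimpleGraph V) : Prop :=
  ∃ (u w : V) (P : G.Walk u w), P.IsPath ∧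
    ∀ x : V, x ∈ P.support ∨ ∃ y ∈ P.support, G.Adj x y

/-! Every edge joins two spine vertices or a vertex of level `k` to one of level `k + 1` with
`k ≤ 2`, so `σ` splits into four sums. A class between levels `k` and `k + 1` is summed from
its lower endpoints and contributes (number of level-`k` vertices) · (children per vertex) ·
(degree difference)². The level sizes `n`, `np`, `npr` come from double counting: a non-spine
vertex has one more neighbour than children, hence exactly one neighbour a level down. On the
spine only the two end edges have endpoints of different degrees, each contributing `1`. -/

section

variable [Fintype V] (G : SimpleGraph V) [DecidableRel G.Adj]

noncomputable def sigmaTerm : Sym2 V → ℤ :=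
  Sym2.lift ⟨fun u w => ((G.degree u : ℤ) - G.degree w) ^ 2, fun u w => by ring⟩

theorem sigmaTerm_mk (u w : V) : sigmaTerm G s(u, w) = ((G.degree u : ℤ) - G.degree w) ^ 2 :=
  rfl

theorem sigmaIndex_eq_sum_sigmaTerm : sigmaIndex G = ∑ e ∈ G.edgeFinset, sigmaTerm G e := by
  unfold sigmaIndex sigmaTerm
  congr!

theorem deg_eq_degree (w : V) : deg G w = G.degree w := by
  unfold deg
  congr!

theorem nbrCount_eq_card (w : V) (P : V → Prop) [DecidablePred P] :
    nbrCount G w P = #{x ∈ G.neighborFinset w | P x} := by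
  unfold nbrCount
  congr!

variable (level : V → ℕ)

theorem sum_edgeFinset_filter_map_eq {M : Type*} [AddCommMonoid M] {a b : ℕ} (hab : a ≠ b)
    (f : Sym2 V → M) :
    ∑ e ∈ G.edgeFinset with e.map level = s(a, b), f e =
      ∑ w with level w = a, ∑ x ∈ G.neighborFinset w with level x = b, f s(w, x) := by
  rw [Finset.sum_sigma']
  symm
  refine Finset.sum_bij (fun z _ => s(z.1, z.2)) ?_ ?_ ?_ fun _ _ => rfl
  · rintro ⟨w, x⟩ hwx
    simp_all
  · rintro ⟨w₁, x₁⟩ h₁ ⟨w₂, x₂⟩ h₂ h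
    simp only [Finset.mem_sigma, Finset.mem_filter, Finset.mem_univ, true_and] at h₁ h₂
    rcases Sym2.eq_iff.mp h with ⟨rfl, rfl⟩ | ⟨rfl, rfl⟩
    · rfl
    · exact absurd (h₁.1.symm.trans h₂.2.2) hab
  · intro e he
    induction e using Sym2.ind with
    | _ u w =>
      simp only [Finset.mem_filter, SimpleGraph.mem_edgeFinset, SimpleGraph.mem_edgeSet,
        Sym2.map_mk, Sym2.eq_iff] at he
      rcases he with ⟨hadj, ⟨hu, hw⟩ | ⟨hu, hw⟩⟩
      · exact ⟨⟨u, w⟩, by simp [*], rfl⟩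
      · exact ⟨⟨w, u⟩, Finset.mem_sigma.mpr ⟨by simp [hw], by simp [hu, hadj.symm]⟩,
          Sym2.eq_swap⟩

theorem card_level_mul_eq {a b c d : ℕ}
    (hab : ∀ w, level w = a → #{x ∈ G.neighborFinset w | level x = b} = c)
    (hba : ∀ x, level x = b → #{w ∈ G.neighborFinset x | level w = a} = d) :
    #{w | level w = a} * c = #{x | level x = b} * d := by
  refine Finset.card_mul_eq_card_mul G.Adj (fun w hw => ?_) (fun x hx => ?_)
  · rw [← hab w (Finset.mem_filter.mp hw).2, Finset.bipartiteAbove]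
    congr 1
    ext x
    simp [and_comm]
  · rw [← hba x (Finset.mem_filter.mp hx).2, Finset.bipartiteBelow]
    congr 1
    ext w
    simp [and_comm, G.adj_comm]

theorem card_neighbors_level_eq_one {w : V} {a b c : ℕ} (hab : a ≠ b)
    (hnbr : ∀ x, G.Adj w x → level x = a ∨ level x = b) (hdeg : G.degree w = 1 + c)
    (hb : #{x ∈ G.neighborFinset w | level x = b} = c) :
    #{x ∈ G.neighborFinset w | level x = a} = 1 := by
  have hsplit := Finset.card_filter_add_card_filter_not (s := G.neighborFinset w)
    (fun x => level x = a)
  have hnot : {x ∈ G.neighborFinset w | ¬level x = a} = {x ∈ G.neighborFinset w | level x = b} :=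
    Finset.filter_congr fun x hx => by
      have := hnbr x ((G.mem_neighborFinset w x).mp hx)
      omega
  rw [hnot, hb, G.card_neighborFinset_eq_degree, hdeg] at hsplit
  omega

theorem sum_sigmaTerm_filter_map_eq {a b c d : ℕ} (hab : a ≠ b)
    (hchild : ∀ w, level w = a → #{x ∈ G.neighborFinset w | level x = b} = c)
    (hdeg : ∀ x, level x = b → G.degree x = d) :
    ∑ e ∈ G.edgeFinset with e.map level = s(a, b), sigmaTerm G e =
      ∑ w with level w = a, c * ((G.degree w : ℤ) - d) ^ 2 := by
  rw [sum_edgeFinset_filter_map_eq G level hab]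
  refine Finset.sum_congr rfl fun w hw => ?_
  rw [Finset.sum_congr rfl fun x hx => by rw [sigmaTerm_mk, hdeg x (Finset.mem_filter.mp hx).2],
    Finset.sum_const, nsmul_eq_mul, hchild w (Finset.mem_filter.mp hw).2]

theorem sum_sigmaTerm_filter_map_eq_of_degree_eq {a b c da db : ℕ} (hab : a ≠ b)
    (hchild : ∀ w, level w = a → #{x ∈ G.neighborFinset w | level x = b} = c)
    (hdega : ∀ w, level w = a → G.degree w = da) (hdegb : ∀ x, level x = b → G.degree x = db) :
    ∑ e ∈ G.edgeFinset with e.map level = s(a, b), sigmaTerm G e =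
      #{w | level w = a} * c * ((da : ℤ) - db) ^ 2 := by
  rw [sum_sigmaTerm_filter_map_eq G level hab hchild hdegb, Finset.sum_congr rfl fun w hw => by
    rw [hdega w (Finset.mem_filter.mp hw).2], Finset.sum_const, nsmul_eq_mul, mul_assoc]

theorem sum_edgeFinset_eq_sum_levels {M : Type*} [AddCommMonoid M] (hle : ∀ w, level w ≤ 3)
    (hconsec : ∀ w x, G.Adj w x →
      (level w = 0 ∧ level x = 0) ∨ level x = level w + 1 ∨ level w = level x + 1)
    (f : Sym2 V → M) :
    ∑ e ∈ G.edgeFinset, f e =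
      ∑ e ∈ G.edgeFinset with e.map level = s(0, 0), f e +
      (∑ e ∈ G.edgeFinset with e.map level = s(0, 1), f e +
      (∑ e ∈ G.edgeFinset with e.map level = s(1, 2), f e +
      ∑ e ∈ G.edgeFinset with e.map level = s(2, 3), f e)) := by
  have hmaps : ∀ e ∈ G.edgeFinset,
      e.map level ∈ ({s(0, 0), s(0, 1), s(1, 2), s(2, 3)} : Finset (Sym2 ℕ)) := by
    intro e he
    induction e using Sym2.ind with
    | _ u w =>
      rw [SimpleGraph.mem_edgeFinset, SimpleGraph.mem_edgeSet] at he
      have hu := hle u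
      have hw := hle w
      rcases hconsec u w he with ⟨hu0, hw0⟩ | h | h
      · simp [hu0, hw0]
      · have : level u ≤ 2 := by omega
        rw [Sym2.map_mk, h]
        interval_cases level u <;> decide
      · have : level w ≤ 2 := by omega
        rw [Sym2.map_mk, h]
        interval_cases level w <;> decide
  rw [← Finset.sum_fiberwise_of_maps_to hmaps, Finset.sum_insert (by decide),
    Finset.sum_insert (by decide), Finset.sum_insert (by decide), Finset.sum_singleton]

theorem sum_edgeFinset_filter_map_eq_zero_of_path {M : Type*} [AddCommMonoid M] {m : ℕ}
    (v : Fin (m + 1) → V) (hv : Function.Injective v) (hlevel0 : ∀ w, level w = 0 ↔ ∃ i, w = v i)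
    (hadj : ∀ i j, G.Adj (v i) (v j) ↔ (i : ℕ) + 1 = j ∨ (j : ℕ) + 1 = i) (f : Sym2 V → M) :
    ∑ e ∈ G.edgeFinset with e.map level = s(0, 0), f e =
      ∑ i : Fin m, f s(v i.castSucc, v i.succ) := by
  have hlv : ∀ i, level (v i) = 0 := fun i => (hlevel0 _).mpr ⟨i, rfl⟩
  symm
  refine Finset.sum_bij (fun i _ => s(v i.castSucc, v i.succ)) ?_ ?_ ?_ fun _ _ => rfl
  · intro i _
    simp [hlv, hadj]
  · intro i _ j _ h
    rcases Sym2.eq_iff.mp h with ⟨h₁, -⟩ | ⟨h₁, h₂⟩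
    · exact Fin.castSucc_injective _ (hv h₁)
    · have := congrArg Fin.val (hv h₁)
      have := congrArg Fin.val (hv h₂)
      simp only [Fin.val_castSucc, Fin.val_succ] at *
      omega
  · intro e he
    induction e using Sym2.ind with
    | _ x y =>
      simp only [Finset.mem_filter, SimpleGraph.mem_edgeFinset, SimpleGraph.mem_edgeSet,
        Sym2.map_mk, Sym2.eq_iff, or_self] at he
      obtain ⟨hxy, hx, hy⟩ := he
      obtain ⟨i, rfl⟩ := (hlevel0 x).mp hx
      obtain ⟨j, rfl⟩ := (hlevel0 y).mp hy
      rcases (hadj i j).mp hxy with hij | hji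
      · refine ⟨⟨i, by omega⟩, Finset.mem_univ _, ?_⟩
        rw [show (⟨i, _⟩ : Fin m).succ = j from Fin.ext hij]
        rfl
      · refine ⟨⟨j, by omega⟩, Finset.mem_univ _, ?_⟩
        rw [show (⟨j, _⟩ : Fin m).succ = i from Fin.ext hji]
        exact Sym2.eq_swap

end

theorem sum_sq_sub_succ_of_ends {k : ℕ} {a b : ℤ} (d : Fin (k + 3) → ℤ) (h0 : d 0 = a)
    (hlast : d (Fin.last _) = a)
    (hint : ∀ i : Fin (k + 3), 0 < (i : ℕ) → (i : ℕ) < k + 2 → d i = b) :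
    ∑ i : Fin (k + 2), (d i.castSucc - d i.succ) ^ 2 = 2 * (a - b) ^ 2 := by
  rw [Fin.sum_univ_succ, Fin.sum_univ_castSucc]
  have hmid : ∀ i : Fin k, d i.castSucc.succ.castSucc - d i.castSucc.succ.succ = 0 := fun i => by
    rw [hint _ (by simp) (by simp), hint _ (by simp) (by simp), sub_self]
  simp only [hmid, Fin.castSucc_zero, Fin.succ_last, zero_pow two_ne_zero, Finset.sum_const_zero]
  rw [h0, hlast, hint (Fin.succ 0) (by simp) (by simp), hint _ (by simp) (by simp)]
  ring

theorem sum_comp_of_ends {k : ℕ} {a b : ℤ} (d : Fin (k + 3) → ℤ) (h0 : d 0 = a)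
    (hlast : d (Fin.last _) = a)
    (hint : ∀ i : Fin (k + 3), 0 < (i : ℕ) → (i : ℕ) < k + 2 → d i = b) (g : ℤ → ℤ) :
    ∑ i : Fin (k + 3), g (d i) = 2 * g a + (k + 1) * g b := by
  rw [Fin.sum_univ_succ, Fin.sum_univ_castSucc, Finset.sum_congr rfl fun i _ => by
    rw [hint _ (by simp) (by simp; omega)], Finset.sum_const, Finset.card_univ, Fintype.card_fin,
    nsmul_eq_mul, h0, Fin.succ_last, hlast]
  push_cast
  ring

/-- sigma index of the three-level tree of Problem 1. The spine is
`v 0, …, v (n-1)` (level 0), each spine vertex has `p` first-level pendants of degree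
`1 + r`, each first-level pendant has `r` second-level pendants of degree `1 + s`, and
each second-level pendant has `s` leaves (level 3). -/
theorem sigma_three_level_tree {V : Type*} [Fintype V] (G : SimpleGraph V)
    (n p r s : ℕ) (v : Fin n → V) (level : V → ℕ)
    (hn : 3 ≤ n)
    (hinj : Function.Injective v)
    (hlevel0 : ∀ w : V, level w = 0 ↔ ∃ i, w = v i)
    (hlevelle : ∀ w : V, level w ≤ 3)
    (hspine : ∀ i j : Fin n, G.Adj (v i) (v j) ↔ ((i : ℕ) + 1 = (j : ℕ) ∨ (j : ℕ) + 1 = (i : ℕ)))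
    (hconsec : ∀ w x : V, G.Adj w x →
      (level w = 0 ∧ level x = 0) ∨ level x = level w + 1 ∨ level w = level x + 1)
    (hdegEnd : deg G (v ⟨0, by omega⟩) = p + 1 ∧ deg G (v ⟨n - 1, by omega⟩) = p + 1)
    (hdegInt : ∀ i : Fin n, 0 < (i : ℕ) → (i : ℕ) < n - 1 → deg G (v i) = p + 2)
    (hchild0 : ∀ i : Fin n, nbrCount G (v i) (fun w => level w = 1) = p)
    (hdeg1 : ∀ w : V, level w = 1 → deg G w = 1 + r)
    (hchild1 : ∀ w : V, level w = 1 → nbrCount G w (fun x => level x = 2) = r)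
    (hdeg2 : ∀ w : V, level w = 2 → deg G w = 1 + s)
    (hchild2 : ∀ w : V, level w = 2 → nbrCount G w (fun x => level x = 3) = s)
    (hdeg3 : ∀ w : V, level w = 3 → deg G w = 1) :
    sigmaIndex G =
      (n : ℤ) * (p : ℤ) * (r : ℤ) * (s : ℤ) ^ 3 +
      (p : ℤ) * ((n : ℤ) - 2) * ((p : ℤ) + 1 - (r : ℤ)) ^ 2 +
      2 * (p : ℤ) * ((p : ℤ) - (r : ℤ)) ^ 2 +
      (n : ℤ) * (p : ℤ) * (r : ℤ) * ((r : ℤ) - (s : ℤ)) ^ 2 + 2 := by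
  classical
  obtain ⟨k, rfl⟩ : ∃ k, n = k + 3 := ⟨n - 3, by omega⟩
  simp only [deg_eq_degree, nbrCount_eq_card] at *
  have hL0 : ({w | level w = 0} : Finset V) = univ.map ⟨v, hinj⟩ := by
    ext w
    simp [hlevel0 w, eq_comm]
  have hchildSpine : ∀ w, level w = 0 → #{x ∈ G.neighborFinset w | level x = 1} = p := by
    intro w hw
    obtain ⟨i, rfl⟩ := (hlevel0 w).mp hw
    exact hchild0 i
  have hparent : ∀ {a} w, level w = a + 1 → ∀ x, G.Adj w x → level x = a ∨ level x = a + 2 :=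
    fun w hw x hx => by have := hconsec w x hx; omega
  have hcard1 := card_level_mul_eq G level hchildSpine fun w hw =>
    card_neighbors_level_eq_one G level (by omega) (hparent w hw) (hdeg1 w hw) (hchild1 w hw)
  have hcard2 := card_level_mul_eq G level hchild1 fun w hw =>
    card_neighbors_level_eq_one G level (by omega) (hparent w hw) (hdeg2 w hw) (hchild2 w hw)
  simp only [hL0, card_map, card_univ, Fintype.card_fin, mul_one] at hcard1 hcard2
  have hdeg : ∀ i : Fin (k + 3), 0 < (i : ℕ) → (i : ℕ) < k + 2 → (G.degree (v i) : ℤ) = p + 2 :=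
    fun i h0 hlt => by rw [hdegInt i h0 (by omega)]; push_cast; ring
  have hend : (G.degree (v 0) : ℤ) = p + 1 ∧ (G.degree (v (Fin.last _)) : ℤ) = p + 1 :=
    ⟨by exact_mod_cast hdegEnd.1, by exact_mod_cast hdegEnd.2⟩
  rw [sigmaIndex_eq_sum_sigmaTerm, sum_edgeFinset_eq_sum_levels G level hlevelle hconsec,
    sum_edgeFinset_filter_map_eq_zero_of_path G level v hinj hlevel0 hspine,
    sum_sigmaTerm_filter_map_eq G level (by omega) hchildSpine hdeg1,
    sum_sigmaTerm_filter_map_eq_of_degree_eq G level (by omega) hchild1 hdeg1 hdeg2,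
    sum_sigmaTerm_filter_map_eq_of_degree_eq G level (by omega) hchild2 hdeg2 hdeg3,
    hL0, sum_map, ← hcard2, ← hcard1]
  simp only [sigmaTerm_mk, Function.Embedding.coeFn_mk]
  rw [sum_sq_sub_succ_of_ends (fun i => (G.degree (v i) : ℤ)) hend.1 hend.2 hdeg,
    sum_comp_of_ends (fun i => (G.degree (v i) : ℤ)) hend.1 hend.2 hdeg
      fun d => p * (d - (1 + r : ℕ)) ^ 2]
  push_cast
  ring
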